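/- Every cubic tree, that is, every graph obtained from a tree by adding half-edges so that every vertex becomes incident with exactly three edges, is edge-reflexive. -/

import Mathlib

open SimpleGraph

/-- A `k`-coloring of a graph `X`: a partition of the vertex set into `k`
(possibly empty) independent sets, the color classes of the coloring. -/
def IsColoring {V : Type*} (k : ℕ) (X : SimpleGraph V) (c : Fin k → Set V) : Prop :=
  (∀ v : V, ∃! i : Fin k, v ∈ c i) ∧
  ∀ i : Fin k, ∀ u ∈ c i, ∀ w ∈ c i, ¬ X.Adj u w

/-- `S` occurs as a color class in some `k`-coloring of `X`. -/
def IsColorClass {V : Type*} (k : ℕ) (X : SimpleGraph V) (S : Set V) : Prop :=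
  ∃ c : Fin k → Set V, IsColoring k X c ∧ ∃ i, c i = S

/-- The `k`-coloring complex `B(X)`: vertices are the color classes of
`k`-colorings of `X`, two of them adjacent if they occur together in some
`k`-coloring of `X`. -/
def ColoringComplex {V : Type*} (k : ℕ) (X : SimpleGraph V) :
    SimpleGraph {S : Set V // IsColorClass k X S} where
  Adj C D := C ≠ D ∧ ∃ c : Fin k → Set V,
    IsColoring k X c ∧ (∃ i, c i = C.1) ∧ (∃ j, c j = D.1)
  symm := ⟨by
    rintro C D ⟨hne, c, hc, hi, hj⟩
    exact ⟨hne.symm, c, hc, hj, hi⟩⟩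
  loopless := ⟨by rintro C ⟨hne, -⟩; exact hne rfl⟩

/-- The canonical map `φ_X`, sending a vertex `v` to the set of all color
classes containing `v`. -/
def phi {V : Type*} (k : ℕ) (X : SimpleGraph V) (v : V) :
    Set {S : Set V // IsColorClass k X S} :=
  {C | v ∈ C.1}

/-- `X` is reflexive for `k`-colorings: the canonical map `φ_X` is a graph
isomorphism from `X` onto `B²(X) = B(B(X))`. -/
def IsReflexive {V : Type*} (k : ℕ) (X : SimpleGraph V) : Prop :=
  ∃ f : X ≃g ColoringComplex k (ColoringComplex k X),
    ∀ v : V, (f v : {T // IsColorClass k (ColoringComplex k X) T}).1 = phi k X v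

/-- `X` is colorful for `k`-colorings: any two distinct vertices lie in
different color classes of some `k`-coloring of `X`. -/
def Colorful {V : Type*} (k : ℕ) (X : SimpleGraph V) : Prop :=
  ∀ x y : V, x ≠ y → ∃ c : Fin k → Set V, IsColoring k X c ∧
    ∃ i j : Fin k, i ≠ j ∧ x ∈ c i ∧ y ∈ c j

/-- A cubic graph, possibly with half-edges (edges incident with a single
vertex, recorded as edges whose set of ends is a singleton), without parallel
edges: every vertex is incident with exactly three edges. -/
structure CubicGraph (V E : Type*) [DecidableEq V] where
  ends : E → Finset V
  ends_card : ∀ e, (ends e).card = 1 ∨ (ends e).card = 2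
  no_parallel : ∀ e f, (ends e).card = 2 → ends e = ends f → e = f
  cubic : ∀ v : V, ∃ a b c : E, a ≠ b ∧ a ≠ c ∧ b ≠ c ∧
    ∀ f : E, v ∈ ends f ↔ f = a ∨ f = b ∨ f = c

/-- The line graph of a cubic graph: its vertices are the edges of `G`
(including half-edges), two of them adjacent when they share an endpoint. -/
def lineGraph {V E : Type*} [DecidableEq V] (G : CubicGraph V E) : SimpleGraph E where
  Adj e f := e ≠ f ∧ (G.ends e ∩ G.ends f).Nonempty
  symm := ⟨by rintro e f ⟨hne, hint⟩; exact ⟨hne.symm, by rwa [Finset.inter_comm]⟩⟩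
  loopless := ⟨by rintro e ⟨hne, -⟩; exact hne rfl⟩

/-- A cubic graph is edge-reflexive if its line graph is reflexive for
3-colorings. -/
def EdgeReflexive {V E : Type*} [DecidableEq V] (G : CubicGraph V E) : Prop :=
  IsReflexive 3 (lineGraph G)

/-- A cubic graph is edge-colorful if its line graph is colorful for
3-colorings. -/
def EdgeColorful {V E : Type*} [DecidableEq V] (G : CubicGraph V E) : Prop :=
  Colorful 3 (lineGraph G)

/-- The underlying simple graph of a cubic graph: two vertices are adjacent
when some (full) edge joins them. -/
def underlying {V E : Type*} [DecidableEq V] (G : CubicGraph V E) : SimpleGraph V where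
  Adj u w := u ≠ w ∧ ∃ e, G.ends e = {u, w}
  symm := ⟨by rintro u w ⟨hne, e, he⟩; exact ⟨hne.symm, e, by rwa [Finset.pair_comm]⟩⟩
  loopless := ⟨by rintro u ⟨hne, -⟩; exact hne rfl⟩

/-!
Color classes of 3-colorings of `L(G)` are one-factors of `G`, and in a cubic tree every
one-factor is one; so `B(L(G))` is the graph of one-factors, adjacent when disjoint. Each vertex
`w` of `G` gives a 3-coloring of `B(L(G))`, by which of the three edges at `w` a one-factor
contains, and its classes are the sets `φ(x)`. Reflexivity then amounts to two facts about cubic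
trees: distinct edges are separated by some 3-coloring of `L(G)`, so `φ` is injective, and every
3-coloring of `B(L(G))` comes from a vertex.

These go by induction, deleting a leaf `v` with its half-edges `h₁`, `h₂`, which turns its tree
edge `e` into a half-edge. Along the way one shows that the one-factors avoiding a half-edge are
connected under disjointness. Given a 3-coloring of `B(L(G))`, either the two lifts, through `h₁`
and through `h₂`, of some one-factor of the contraction avoiding `e` get different colors; then
connectivity spreads this to all such one-factors, with the same two colors, and the coloring is
the one given by `v`. Or the coloring descends to the contraction, and comes from a vertex there.
-/

lemma fin_three_eq_or_eq_or_eq {x y z : Fin 3} (hxy : x ≠ y) (hxz : x ≠ z) (hyz : y ≠ z)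
    (i : Fin 3) : i = x ∨ i = y ∨ i = z := by
  revert x y z i; decide

lemma fin_three_exists_ne (x y : Fin 3) : ∃ z, z ≠ x ∧ z ≠ y := by
  revert x y; decide

lemma isColoring_iff_exists {W : Type*} {k : ℕ} {X : SimpleGraph W} {c : Fin k → Set W} :
    IsColoring k X c ↔
      ∃ κ : W → Fin k, (∀ ⦃a b⦄, X.Adj a b → κ a ≠ κ b) ∧ ∀ i, c i = {w | κ w = i} := by
  constructor
  · rintro ⟨hunique, hindep⟩
    choose κ hκ hκ_unique using hunique
    have hc : ∀ i, c i = {w | κ w = i} := fun i =>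
      Set.ext fun w => ⟨fun hw => (hκ_unique w i hw).symm, fun hw => hw ▸ hκ w⟩
    refine ⟨κ, fun a b hab hκab => hindep (κ a) a (hκ a) b ?_ hab, hc⟩
    rw [hc]; exact hκab.symm
  · rintro ⟨κ, hκ, hc⟩
    refine ⟨fun w => ⟨κ w, show w ∈ c (κ w) by rw [hc]; rfl, fun i (hi : w ∈ c i) => ?_⟩,
      fun i a ha b hb hab => ?_⟩
    · rw [hc] at hi; exact hi.symm
    · rw [hc] at ha hb; exact hκ hab (ha.trans hb.symm)

namespace CubicGraph

variable {V E : Type*} [DecidableEq V] (G : CubicGraph V E)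

def IsProperColoring (κ : E → Fin 3) : Prop :=
  ∀ ⦃f g : E⦄, (lineGraph G).Adj f g → κ f ≠ κ g

def IsOneFactor (S : Set E) : Prop :=
  ∀ v : V, ∃! f, f ∈ S ∧ v ∈ G.ends f

def OneFactorsExtend : Prop :=
  ∀ S, G.IsOneFactor S → ∃ κ, G.IsProperColoring κ ∧ S = {f | κ f = 0}

def EdgesSeparable : Prop :=
  ∀ f g : E, f ≠ g → ∃ κ, G.IsProperColoring κ ∧ κ f ≠ κ g

def AvoidingAdj (x : E) (S T : Set E) : Prop :=
  G.IsOneFactor S ∧ x ∉ S ∧ G.IsOneFactor T ∧ x ∉ T ∧ Disjoint S T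

def AvoidingOneFactorsConnected : Prop :=
  ∀ x : E, (G.ends x).card = 1 → ∀ S T, G.IsOneFactor S → x ∉ S → G.IsOneFactor T → x ∉ T →
    Relation.ReflTransGen (G.AvoidingAdj x) S T

/-- Read on one-factors, a 3-coloring of `B(L(G))`; `IsLocalAt cl w` says that it is the
coloring given by the three edges at `w`. -/
def IsOneFactorColoring (cl : Set E → Fin 3) : Prop :=
  ∀ S T, G.IsOneFactor S → G.IsOneFactor T → Disjoint S T → cl S ≠ cl T

def IsLocalAt (cl : Set E → Fin 3) (w : V) : Prop :=
  ∀ S T x, G.IsOneFactor S → G.IsOneFactor T → w ∈ G.ends x → x ∈ S → x ∈ T → cl S = cl T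

def OneFactorColoringsLocal : Prop :=
  ∀ cl, G.IsOneFactorColoring cl → ∃ w, G.IsLocalAt cl w

variable {G}

lemma ends_nonempty (f : E) : (G.ends f).Nonempty := by
  rcases G.ends_card f with h | h <;> exact Finset.card_pos.1 (by omega)

lemma exists_incidence (w : V) :
    ∃ t : Fin 3 → E, Function.Injective t ∧ ∀ f, w ∈ G.ends f ↔ f ∈ Set.range t := by
  obtain ⟨a, b, c, hab, hac, hbc, habc⟩ := G.cubic w
  refine ⟨![a, b, c], ?_, fun f => by simp [habc, eq_comm]; tauto⟩
  intro i j hij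
  fin_cases i <;> fin_cases j <;> simp_all [eq_comm]

lemma lineGraph_adj_of_mem {v : V} {f g : E} (hfg : f ≠ g) (hf : v ∈ G.ends f)
    (hg : v ∈ G.ends g) : (lineGraph G).Adj f g :=
  ⟨hfg, v, Finset.mem_inter.2 ⟨hf, hg⟩⟩

lemma false_of_four_mem_ends {v : V} {a b c d : E} (hab : a ≠ b) (hac : a ≠ c) (had : a ≠ d)
    (hbc : b ≠ c) (hbd : b ≠ d) (hcd : c ≠ d) (ha : v ∈ G.ends a) (hb : v ∈ G.ends b)
    (hc : v ∈ G.ends c) (hd : v ∈ G.ends d) : False := by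
  obtain ⟨x, y, z, -, -, -, hxyz⟩ := G.cubic v
  rw [hxyz] at ha hb hc hd
  rcases ha with rfl | rfl | rfl <;> rcases hb with rfl | rfl | rfl <;>
    rcases hc with rfl | rfl | rfl <;> rcases hd with rfl | rfl | rfl <;> simp_all

lemma IsOneFactor.eq_of_mem {S : Set E} (hS : G.IsOneFactor S) {v : V} {f g : E} (hf : f ∈ S)
    (hfv : v ∈ G.ends f) (hg : g ∈ S) (hgv : v ∈ G.ends g) : f = g :=
  (hS v).unique ⟨hf, hfv⟩ ⟨hg, hgv⟩

lemma IsOneFactor.ne_of_disjoint [Nonempty V] {S T : Set E} (hS : G.IsOneFactor S)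
    (hST : Disjoint S T) : S ≠ T := by
  rintro rfl
  obtain ⟨f, ⟨hf, -⟩, -⟩ := hS (Classical.arbitrary V)
  exact Set.disjoint_left.1 hST hf hf

lemma IsOneFactor.notMem_of_mem {S : Set E} (hS : G.IsOneFactor S) {v : V} {f g : E}
    (hf : f ∈ S) (hfv : v ∈ G.ends f) (hgv : v ∈ G.ends g) (hfg : f ≠ g) : g ∉ S :=
  fun hg => hfg (hS.eq_of_mem hf hfv hg hgv)

lemma IsProperColoring.isOneFactor {κ : E → Fin 3} (hκ : G.IsProperColoring κ) (i : Fin 3) :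
    G.IsOneFactor {f | κ f = i} := by
  intro v
  obtain ⟨t, ht, htv⟩ := G.exists_incidence v
  have hκt : Function.Injective (κ ∘ t) := fun j k hjk => by_contra fun hjk' =>
    hκ (lineGraph_adj_of_mem (ht.ne hjk') ((htv _).2 ⟨j, rfl⟩) ((htv _).2 ⟨k, rfl⟩)) hjk
  obtain ⟨j, hj⟩ := Finite.injective_iff_surjective.1 hκt i
  refine ⟨t j, ⟨hj, (htv _).2 ⟨j, rfl⟩⟩, fun g ⟨hgi, hgv⟩ => ?_⟩
  obtain ⟨k, rfl⟩ := (htv g).1 hgv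
  exact congrArg t (hκt (hgi.trans hj.symm))

lemma exists_isProperColoring_of_disjoint {S T : Set E} (hS : G.IsOneFactor S)
    (hT : G.IsOneFactor T) (hST : Disjoint S T) :
    ∃ κ, G.IsProperColoring κ ∧ S = {f | κ f = 0} ∧ T = {f | κ f = 1} := by
  classical
  refine ⟨fun f => if f ∈ S then 0 else if f ∈ T then 1 else 2, ?_, ?_, ?_⟩
  · rintro f g ⟨hfg, w, hw⟩
    obtain ⟨hf, hg⟩ := Finset.mem_inter.1 hw
    obtain ⟨s, ⟨hs, hsw⟩, -⟩ := hS w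
    obtain ⟨t, ⟨ht, htw⟩, -⟩ := hT w
    have hst : s ≠ t := fun h => Set.disjoint_left.1 hST hs (h ▸ ht)
    dsimp only
    split_ifs with hfS hgS hgT hfT hgS hgT hgS hgT <;> simp only [ne_eq, Fin.reduceEq,
      not_false_eq_true, not_true_eq_false]
    · exact hfg (hS.eq_of_mem hfS hf hgS hg)
    · exact hfg (hT.eq_of_mem hfT hf hgT hg)
    · exact false_of_four_mem_ends hfg (ne_of_mem_of_not_mem hs hfS).symm
        (ne_of_mem_of_not_mem ht hfT).symm (ne_of_mem_of_not_mem hs hgS).symm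
        (ne_of_mem_of_not_mem ht hgT).symm hst hf hg hsw htw
  · ext f; by_cases hf : f ∈ S <;> by_cases hfT : f ∈ T <;> simp [hf, hfT]
  · ext f
    by_cases hf : f ∈ S
    · simp [hf, Set.disjoint_left.1 hST hf]
    · by_cases hfT : f ∈ T <;> simp [hf, hfT]

lemma IsOneFactor.compl_union {S T : Set E} (hS : G.IsOneFactor S) (hT : G.IsOneFactor T)
    (hST : Disjoint S T) : G.IsOneFactor (S ∪ T)ᶜ := by
  obtain ⟨κ, hκ, rfl, rfl⟩ := exists_isProperColoring_of_disjoint hS hT hST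
  convert hκ.isOneFactor 2 using 1
  ext f
  simp only [Set.mem_compl_iff, Set.mem_union, Set.mem_ofPred_eq]
  generalize κ f = i
  revert i; decide

lemma AvoidingAdj.symm {x : E} {S T : Set E} (h : G.AvoidingAdj x S T) : G.AvoidingAdj x T S :=
  ⟨h.2.2.1, h.2.2.2.1, h.1, h.2.1, h.2.2.2.2.symm⟩

lemma reflTransGen_avoidingAdj_symm {x : E} {S T : Set E}
    (h : Relation.ReflTransGen (G.AvoidingAdj x) S T) :
    Relation.ReflTransGen (G.AvoidingAdj x) T S :=
  Relation.reflTransGen_swap.1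
    (Relation.ReflTransGen.mono (p := Function.swap (G.AvoidingAdj x)) (fun _ _ => .symm) S T h)

lemma EdgesSeparable.exists_isProperColoring (h : G.EdgesSeparable) (w : V) :
    ∃ κ, G.IsProperColoring κ := by
  obtain ⟨a, b, -, hab, -⟩ := G.cubic w
  obtain ⟨κ, hκ, -⟩ := h a b hab
  exact ⟨κ, hκ⟩

section LineGraph

lemma isColorClass_lineGraph_iff {S : Set E} :
    IsColorClass 3 (lineGraph G) S ↔ ∃ κ, G.IsProperColoring κ ∧ ∃ i, S = {f | κ f = i} := by
  constructor
  · rintro ⟨c, hc, i, rfl⟩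
    obtain ⟨κ, hκ, hc⟩ := isColoring_iff_exists.1 hc
    exact ⟨κ, hκ, i, hc i⟩
  · rintro ⟨κ, hκ, i, rfl⟩
    exact ⟨_, isColoring_iff_exists.2 ⟨κ, hκ, fun _ => rfl⟩, i, rfl⟩

lemma isOneFactor_of_isColorClass {S : Set E} (h : IsColorClass 3 (lineGraph G) S) :
    G.IsOneFactor S := by
  obtain ⟨κ, hκ, i, rfl⟩ := isColorClass_lineGraph_iff.1 h
  exact hκ.isOneFactor i

lemma OneFactorsExtend.isColorClass_iff (h : G.OneFactorsExtend) {S : Set E} :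
    IsColorClass 3 (lineGraph G) S ↔ G.IsOneFactor S := by
  refine ⟨isOneFactor_of_isColorClass, fun hS => ?_⟩
  obtain ⟨κ, hκ, hS⟩ := h S hS
  exact isColorClass_lineGraph_iff.2 ⟨κ, hκ, 0, hS⟩

lemma EdgesSeparable.phi_injective (h : G.EdgesSeparable) :
    Function.Injective (phi 3 (lineGraph G)) := by
  intro x y hxy
  by_contra hne
  obtain ⟨κ, hκ, hκxy⟩ := h x y hne
  have hC : (⟨{f | κ f = κ x}, isColorClass_lineGraph_iff.2 ⟨κ, hκ, _, rfl⟩⟩ :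
      {S : Set E // IsColorClass 3 (lineGraph G) S}) ∈ phi 3 (lineGraph G) x := rfl
  rw [hxy] at hC
  exact hκxy (Eq.symm hC)

variable [Nonempty V]

lemma coloringComplex_adj_iff {C D : {S : Set E // IsColorClass 3 (lineGraph G) S}} :
    (ColoringComplex 3 (lineGraph G)).Adj C D ↔ Disjoint C.1 D.1 := by
  constructor
  · rintro ⟨hCD, c, hc, ⟨i, hi⟩, ⟨j, hj⟩⟩
    obtain ⟨κ, -, hc⟩ := isColoring_iff_exists.1 hc
    have hij : i ≠ j := by rintro rfl; exact hCD (Subtype.ext (hi.symm.trans hj))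
    rw [← hi, ← hj, hc, hc]
    exact Set.disjoint_left.2 fun f hfi hfj => hij (hfi.symm.trans hfj)
  · intro hCD
    have hC := isOneFactor_of_isColorClass C.2
    obtain ⟨κ, hκ, hκC, hκD⟩ :=
      exists_isProperColoring_of_disjoint hC (isOneFactor_of_isColorClass D.2) hCD
    exact ⟨fun h => hC.ne_of_disjoint hCD (congrArg Subtype.val h), fun i => {f | κ f = i},
      isColoring_iff_exists.2 ⟨κ, hκ, fun _ => rfl⟩, ⟨0, hκC.symm⟩, ⟨1, hκD.symm⟩⟩

lemma isColoring_phi {w : V} {t : Fin 3 → E} (ht : Function.Injective t)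
    (htw : ∀ f, w ∈ G.ends f ↔ f ∈ Set.range t) :
    IsColoring 3 (ColoringComplex 3 (lineGraph G)) (phi 3 (lineGraph G) ∘ t) := by
  refine ⟨fun C => ?_, fun i C hC D hD hCD => ?_⟩
  · obtain ⟨f, ⟨hfC, hfw⟩, hf⟩ := isOneFactor_of_isColorClass C.2 w
    obtain ⟨i, rfl⟩ := (htw f).1 hfw
    exact ⟨i, hfC, fun j hj => ht (hf (t j) ⟨hj, (htw _).2 ⟨j, rfl⟩⟩)⟩
  · exact Set.disjoint_left.1 (coloringComplex_adj_iff.1 hCD) hC hD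

lemma isColorClass_phi (x : E) :
    IsColorClass 3 (ColoringComplex 3 (lineGraph G)) (phi 3 (lineGraph G) x) := by
  obtain ⟨w, hw⟩ := ends_nonempty (G := G) x
  obtain ⟨t, ht, htw⟩ := G.exists_incidence w
  obtain ⟨i, rfl⟩ := (htw x).1 hw
  exact ⟨_, isColoring_phi ht htw, i, rfl⟩

lemma exists_isOneFactorColoring_eq (h2 : G.OneFactorsExtend)
    {κB : {S : Set E // IsColorClass 3 (lineGraph G) S} → Fin 3}
    (hκB : ∀ ⦃C D⦄, (ColoringComplex 3 (lineGraph G)).Adj C D → κB C ≠ κB D) :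
    ∃ cl, G.IsOneFactorColoring cl ∧ ∀ C, cl C.1 = κB C := by
  classical
  refine ⟨fun S => if h : IsColorClass 3 (lineGraph G) S then κB ⟨S, h⟩ else 0,
    fun S T hS hT hST => ?_, fun C => dif_pos C.2⟩
  dsimp only
  rw [dif_pos (h2.isColorClass_iff.2 hS), dif_pos (h2.isColorClass_iff.2 hT)]
  exact hκB (coloringComplex_adj_iff.2 hST)

lemma exists_vertex_of_isColoring (h2 : G.OneFactorsExtend) (h3 : G.EdgesSeparable)
    (h5 : G.OneFactorColoringsLocal)
    {cB : Fin 3 → Set {S : Set E // IsColorClass 3 (lineGraph G) S}}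
    (hcB : IsColoring 3 (ColoringComplex 3 (lineGraph G)) cB) :
    ∃ w, ∀ i, ∃ x, w ∈ G.ends x ∧ cB i = phi 3 (lineGraph G) x := by
  obtain ⟨κB, hκB, hcB⟩ := isColoring_iff_exists.1 hcB
  obtain ⟨cl, hcl_coloring, hcl⟩ := exists_isOneFactorColoring_eq h2 hκB
  obtain ⟨w, hw⟩ := h5 cl hcl_coloring
  obtain ⟨κ, hκ⟩ := h3.exists_isProperColoring w
  obtain ⟨t, ht, htw⟩ := G.exists_incidence w
  have hcls : ∀ i, G.IsOneFactor {f | κ f = κ (t i)} := fun i => hκ.isOneFactor _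
  have hlocal : ∀ (C : {S : Set E // IsColorClass 3 (lineGraph G) S}) i, t i ∈ C.1 →
      κB C = cl {f | κ f = κ (t i)} := fun C i hi =>
    (hcl C).symm.trans (hw _ _ _ (isOneFactor_of_isColorClass C.2) (hcls i)
      ((htw _).2 ⟨i, rfl⟩) hi rfl)
  have hinj : Function.Injective fun i => cl {f | κ f = κ (t i)} := by
    intro i j hij
    by_contra hne
    have hκij := hκ (lineGraph_adj_of_mem (ht.ne hne) ((htw _).2 ⟨i, rfl⟩) ((htw _).2 ⟨j, rfl⟩))
    exact hcl_coloring _ _ (hcls i) (hcls j)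
      (Set.disjoint_left.2 fun f hfi hfj => hκij (hfi.symm.trans hfj)) hij
  have hclass : ∀ i, cB (cl {f | κ f = κ (t i)}) = phi 3 (lineGraph G) (t i) := by
    intro i
    ext C
    rw [hcB]
    refine ⟨fun hCi => ?_, fun hi => hlocal C i hi⟩
    obtain ⟨f, ⟨hfC, hfw⟩, -⟩ := isOneFactor_of_isColorClass C.2 w
    obtain ⟨j, rfl⟩ := (htw f).1 hfw
    have hji : j = i := hinj ((hlocal C j hfC).symm.trans hCi)
    exact hji ▸ hfC
  refine ⟨w, fun i => ?_⟩
  obtain ⟨j, rfl⟩ := Finite.injective_iff_surjective.1 hinj i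
  exact ⟨t j, (htw _).2 ⟨j, rfl⟩, hclass j⟩

theorem isReflexive_lineGraph (h2 : G.OneFactorsExtend) (h3 : G.EdgesSeparable)
    (h5 : G.OneFactorColoringsLocal) : IsReflexive 3 (lineGraph G) := by
  let φ : E → {T // IsColorClass 3 (ColoringComplex 3 (lineGraph G)) T} :=
    fun x => ⟨phi 3 (lineGraph G) x, isColorClass_phi x⟩
  have hinj : Function.Injective φ := fun x y hxy => h3.phi_injective (congrArg Subtype.val hxy)
  have hsurj : Function.Surjective φ := by
    rintro ⟨T, cB, hcB, i, rfl⟩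
    obtain ⟨w, hw⟩ := exists_vertex_of_isColoring h2 h3 h5 hcB
    obtain ⟨x, -, hx⟩ := hw i
    exact ⟨x, Subtype.ext hx.symm⟩
  refine ⟨⟨Equiv.ofBijective φ ⟨hinj, hsurj⟩, fun {x y} => ?_⟩, fun _ => rfl⟩
  constructor
  · rintro ⟨hne, cB, hcB, ⟨i, hi⟩, ⟨j, hj⟩⟩
    obtain ⟨w, hw⟩ := exists_vertex_of_isColoring h2 h3 h5 hcB
    obtain ⟨x', hx'w, hx'⟩ := hw i
    obtain ⟨y', hy'w, hy'⟩ := hw j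
    obtain rfl : x = x' := h3.phi_injective (hi.symm.trans hx')
    obtain rfl : y = y' := h3.phi_injective (hj.symm.trans hy')
    exact lineGraph_adj_of_mem (fun h => hne (congrArg _ h)) hx'w hy'w
  · rintro ⟨hxy, w, hw⟩
    obtain ⟨hxw, hyw⟩ := Finset.mem_inter.1 hw
    obtain ⟨t, ht, htw⟩ := G.exists_incidence w
    obtain ⟨i, rfl⟩ := (htw x).1 hxw
    obtain ⟨j, rfl⟩ := (htw y).1 hyw
    exact ⟨fun h => hxy (hinj h), _, isColoring_phi ht htw, ⟨i, rfl⟩, ⟨j, rfl⟩⟩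

end LineGraph

structure IsLeaf (G : CubicGraph V E) (v u : V) (e h₁ h₂ : E) : Prop where
  ne : v ≠ u
  ends_e : G.ends e = {v, u}
  ends_h₁ : G.ends h₁ = {v}
  ends_h₂ : G.ends h₂ = {v}
  h₁_ne_h₂ : h₁ ≠ h₂
  mem_ends_iff : ∀ f, v ∈ G.ends f ↔ f = e ∨ f = h₁ ∨ f = h₂

namespace IsLeaf

variable {v u : V} {e h₁ h₂ : E} (L : G.IsLeaf v u e h₁ h₂)
include L

lemma swap : G.IsLeaf v u e h₂ h₁ :=
  ⟨L.ne, L.ends_e, L.ends_h₂, L.ends_h₁, L.h₁_ne_h₂.symm,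
    fun f => (L.mem_ends_iff f).trans (by tauto)⟩

lemma mem_ends_e : v ∈ G.ends e := by simp [L.ends_e]

lemma mem_ends_h₁ : v ∈ G.ends h₁ := by simp [L.ends_h₁]

lemma eq_of_mem_ends_h₁ {w : V} (hw : w ∈ G.ends h₁) : w = v := by simpa [L.ends_h₁] using hw

lemma e_ne_h₁ : e ≠ h₁ := by
  intro h
  have hu : u ∈ G.ends e := by simp [L.ends_e]
  exact L.ne (L.eq_of_mem_ends_h₁ (h ▸ hu)).symm

lemma eq_or_notMem_ends_iff {f : E} : (f = e ∨ v ∉ G.ends f) ↔ f ≠ h₁ ∧ f ≠ h₂ := by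
  constructor
  · rintro (rfl | hf)
    · exact ⟨L.e_ne_h₁, L.swap.e_ne_h₁⟩
    · exact ⟨fun h => hf (h ▸ L.mem_ends_h₁), fun h => hf (h ▸ L.swap.mem_ends_h₁)⟩
  · rintro ⟨hf₁, hf₂⟩
    by_cases hf : v ∈ G.ends f
    · exact .inl (by simpa [hf₁, hf₂] using (L.mem_ends_iff f).1 hf)
    · exact .inr hf

lemma eq_or_notMem_ends_of_mem_ends {w : V} (hw : w ≠ v) {f : E} (hf : w ∈ G.ends f) :
    f = e ∨ v ∉ G.ends f :=
  L.eq_or_notMem_ends_iff.2 ⟨fun h => hw (L.eq_of_mem_ends_h₁ (h ▸ hf)),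
    fun h => hw (L.swap.eq_of_mem_ends_h₁ (h ▸ hf))⟩

lemma subtype_ends_e : (G.ends e).subtype (· ≠ v) = {⟨u, L.ne.symm⟩} := by
  ext w
  simp [Finset.mem_subtype, L.ends_e, w.2, Subtype.ext_iff]

omit L in
lemma map_subtype_ends {f : E} (hf : v ∉ G.ends f) :
    ((G.ends f).subtype (· ≠ v)).map (Function.Embedding.subtype _) = G.ends f :=
  Finset.subtype_map_of_mem fun _ hx h => hf (h ▸ hx)

/-- Deleting the leaf `v` with its two half-edges turns `e` into a half-edge at `u`. Nothing
here depends on the order of `h₁` and `h₂`, so `L.swap.contract` is definitionally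
`L.contract`: this is how the two half-edges are treated symmetrically. -/
def contract : CubicGraph {x // x ≠ v} {f : E // f = e ∨ v ∉ G.ends f} where
  ends f := (G.ends f).subtype (· ≠ v)
  ends_card := by
    rintro ⟨f, rfl | hf⟩
    · simp [L.subtype_ends_e]
    · rw [← Finset.card_map, map_subtype_ends hf]
      exact G.ends_card f
  no_parallel := by
    have hv : ∀ f : {f : E // f = e ∨ v ∉ G.ends f},
        ((G.ends f).subtype (· ≠ v)).card = 2 → v ∉ G.ends f := by
      rintro ⟨f, rfl | hf⟩ h
      · simp [L.subtype_ends_e] at h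
      · exact hf
    intro f g hf hfg
    have hg := hv g (hfg ▸ hf)
    refine Subtype.ext (G.no_parallel f g ?_ ?_)
    · rwa [← map_subtype_ends (hv f hf), Finset.card_map]
    · rw [← map_subtype_ends (hv f hf), ← map_subtype_ends hg, hfg]
  cubic := by
    intro w
    obtain ⟨a, b, c, hab, hac, hbc, habc⟩ := G.cubic w
    have keep : ∀ {f}, (w : V) ∈ G.ends f → f = e ∨ v ∉ G.ends f :=
      fun hf => L.eq_or_notMem_ends_of_mem_ends w.2 hf
    refine ⟨⟨a, keep ((habc a).2 (.inl rfl))⟩, ⟨b, keep ((habc b).2 (.inr (.inl rfl)))⟩,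
      ⟨c, keep ((habc c).2 (.inr (.inr rfl)))⟩, by simpa [Subtype.ext_iff],
      by simpa [Subtype.ext_iff], by simpa [Subtype.ext_iff], fun f => ?_⟩
    simp [Finset.mem_subtype, habc, Subtype.ext_iff]

lemma mem_contract_ends {w : {x // x ≠ v}} {f : {f : E // f = e ∨ v ∉ G.ends f}} :
    w ∈ L.contract.ends f ↔ (w : V) ∈ G.ends f :=
  Finset.mem_subtype

lemma card_contract_ends_e : (L.contract.ends ⟨e, .inl rfl⟩).card = 1 := by
  simp [contract, L.subtype_ends_e]

lemma card_contract_ends {f : E} (hf : v ∉ G.ends f) :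
    (L.contract.ends ⟨f, .inr hf⟩).card = (G.ends f).card := by
  rw [← Finset.card_map, contract, map_subtype_ends hf]

lemma underlying_adj_iff {y : V} : (underlying G).Adj v y ↔ y = u := by
  refine ⟨fun ⟨hvy, f, hf⟩ => ?_, fun h => ⟨h ▸ L.ne, e, h ▸ L.ends_e⟩⟩
  have hy : y ∈ G.ends f := by simp [hf]
  rcases (L.mem_ends_iff f).1 (by simp [hf]) with rfl | rfl | rfl
  · simpa [L.ends_e, hvy.symm] using hy
  · exact absurd (L.eq_of_mem_ends_h₁ hy).symm hvy
  · exact absurd (L.swap.eq_of_mem_ends_h₁ hy).symm hvy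

lemma underlying_contract_adj {a b : {x // x ≠ v}} :
    (underlying L.contract).Adj a b ↔ (underlying G).Adj a b := by
  constructor
  · rintro ⟨hab, ⟨f, rfl | hv⟩, hf⟩
    · have := congrArg Finset.card hf
      simp [card_contract_ends_e, Finset.card_pair hab] at this
    refine ⟨fun h => hab (Subtype.ext h), f, ?_⟩
    rw [← map_subtype_ends hv]
    change Finset.map _ (L.contract.ends ⟨f, .inr hv⟩) = _
    simp [hf]
  · rintro ⟨hab, f, hf⟩
    have hv : v ∉ G.ends f := by simp [hf, a.2.symm, b.2.symm]
    refine ⟨fun h => hab (congrArg Subtype.val h), ⟨f, .inr hv⟩, ?_⟩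
    ext w
    simp [contract, Finset.mem_subtype, hf, Subtype.ext_iff]

lemma contract_isTree (htree : (underlying G).IsTree) : (underlying L.contract).IsTree := by
  let iso : underlying L.contract ≃g (underlying G).induce {v}ᶜ :=
    ⟨Equiv.subtypeEquivRight fun _ => Iff.rfl, L.underlying_contract_adj.symm⟩
  refine iso.isTree_iff.2 ⟨(connected_iff _).2 ⟨?_, ⟨⟨u, L.ne.symm⟩⟩⟩, htree.isAcyclic.induce _⟩
  refine htree.connected.preconnected.induce_of_degree_eq_one fun x hx => ?_
  obtain rfl : x = v := by simpa using hx
  exact fun y hy z hz => (L.underlying_adj_iff.1 hy).trans (L.underlying_adj_iff.1 hz).symm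

lemma isOneFactor_iff {S : Set E} :
    G.IsOneFactor S ↔
      L.contract.IsOneFactor (Subtype.val ⁻¹' S) ∧ ∃! f, f ∈ S ∧ v ∈ G.ends f := by
  refine ⟨fun hS => ⟨fun w => ?_, hS v⟩, fun ⟨hS, hSv⟩ w => ?_⟩
  · obtain ⟨f, ⟨hfS, hfw⟩, hf⟩ := hS w
    exact ⟨⟨f, L.eq_or_notMem_ends_of_mem_ends w.2 hfw⟩, ⟨hfS, L.mem_contract_ends.2 hfw⟩,
      fun g hg => Subtype.ext (hf g ⟨hg.1, L.mem_contract_ends.1 hg.2⟩)⟩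
  · by_cases hw : w = v
    · exact hw ▸ hSv
    obtain ⟨f, ⟨hfS, hfw⟩, hf⟩ := hS ⟨w, hw⟩
    exact ⟨f, ⟨hfS, L.mem_contract_ends.1 hfw⟩, fun g hg => congrArg Subtype.val
      (hf ⟨g, L.eq_or_notMem_ends_of_mem_ends hw hg.2⟩ ⟨hg.1, L.mem_contract_ends.2 hg.2⟩)⟩

lemma isOneFactor_preimage {S : Set E} (hS : G.IsOneFactor S) :
    L.contract.IsOneFactor (Subtype.val ⁻¹' S) :=
  (L.isOneFactor_iff.1 hS).1

lemma isOneFactor_cases {S : Set E} (hS : G.IsOneFactor S) :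
    e ∈ S ∧ h₁ ∉ S ∧ h₂ ∉ S ∨ h₁ ∈ S ∧ e ∉ S ∧ h₂ ∉ S ∨ h₂ ∈ S ∧ e ∉ S ∧ h₁ ∉ S := by
  obtain ⟨f, ⟨hfS, hfv⟩, -⟩ := hS v
  have hne : ∀ {x}, v ∈ G.ends x → f ≠ x → x ∉ S := hS.notMem_of_mem hfS hfv
  rcases (L.mem_ends_iff f).1 hfv with rfl | rfl | rfl
  · exact .inl ⟨hfS, hne L.mem_ends_h₁ L.e_ne_h₁, hne L.swap.mem_ends_h₁ L.swap.e_ne_h₁⟩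
  · exact .inr (.inl ⟨hfS, hne L.mem_ends_e L.e_ne_h₁.symm,
      hne L.swap.mem_ends_h₁ L.h₁_ne_h₂⟩)
  · exact .inr (.inr ⟨hfS, hne L.mem_ends_e L.swap.e_ne_h₁.symm,
      hne L.mem_ends_h₁ L.h₁_ne_h₂.symm⟩)

lemma eq_of_preimage_eq {S T : Set E} (hS : G.IsOneFactor S) (hT : G.IsOneFactor T)
    (hST : (Subtype.val ⁻¹' S : Set {f : E // f = e ∨ v ∉ G.ends f}) = Subtype.val ⁻¹' T)
    {x : E} (hxS : x ∈ S) (hxT : x ∈ T) (hxv : v ∈ G.ends x) : S = T := by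
  ext f
  by_cases hf : f = e ∨ v ∉ G.ends f
  · exact Set.ext_iff.1 hST ⟨f, hf⟩
  have hfv : v ∈ G.ends f := by
    rw [L.eq_or_notMem_ends_iff] at hf
    rcases not_and_or.1 hf with h | h <;> rw [not_not.1 h]
    exacts [L.mem_ends_h₁, L.swap.mem_ends_h₁]
  exact ⟨fun hfS => hS.eq_of_mem hfS hfv hxS hxv ▸ hxT,
    fun hfT => hT.eq_of_mem hfT hfv hxT hxv ▸ hxS⟩

lemma h₁_notMem_image (T : Set {f : E // f = e ∨ v ∉ G.ends f}) :
    h₁ ∉ Subtype.val '' T := by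
  rintro ⟨f, -, hf⟩
  exact (L.eq_or_notMem_ends_iff.1 f.2).1 hf

lemma h₂_notMem_image_union (T : Set {f : E // f = e ∨ v ∉ G.ends f}) :
    h₂ ∉ Subtype.val '' T ∪ {h₁} := by
  simp [L.swap.h₁_notMem_image, L.h₁_ne_h₂.symm]

lemma preimage_image_union (T : Set {f : E // f = e ∨ v ∉ G.ends f}) :
    Subtype.val ⁻¹' (Subtype.val '' T ∪ {h₁}) = T := by
  ext f
  simp only [Set.mem_preimage, Set.mem_union, Set.mem_singleton_iff,
    (L.eq_or_notMem_ends_iff.1 f.2).1, or_false, Subtype.val_injective.mem_set_image]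

lemma image_preimage {S : Set E} (h₁S : h₁ ∉ S) (h₂S : h₂ ∉ S) :
    Subtype.val '' (Subtype.val ⁻¹' S : Set {f : E // f = e ∨ v ∉ G.ends f}) = S :=
  Set.image_preimage_eq_of_subset fun f hf =>
    ⟨⟨f, L.eq_or_notMem_ends_iff.2 ⟨fun h => h₁S (h ▸ hf), fun h => h₂S (h ▸ hf)⟩⟩, rfl⟩

lemma image_preimage_union {S : Set E} (h₁S : h₁ ∈ S) (h₂S : h₂ ∉ S) :
    Subtype.val '' (Subtype.val ⁻¹' S : Set {f : E // f = e ∨ v ∉ G.ends f}) ∪ {h₁} = S := by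
  ext f
  by_cases hf : f = h₁
  · simp [hf, h₁S]
  · simp only [Set.mem_union, Set.mem_image, Set.mem_preimage, Subtype.exists, exists_and_right,
      exists_eq_right, Set.mem_singleton_iff, hf, or_false]
    exact ⟨fun ⟨_, h⟩ => h, fun h => ⟨L.eq_or_notMem_ends_iff.2 ⟨hf, fun h' => h₂S (h' ▸ h)⟩, h⟩⟩

lemma isOneFactor_image {T : Set {f : E // f = e ∨ v ∉ G.ends f}}
    (hT : L.contract.IsOneFactor T) (heT : ⟨e, .inl rfl⟩ ∈ T) :
    G.IsOneFactor (Subtype.val '' T) := by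
  refine L.isOneFactor_iff.2 ⟨by rwa [Set.preimage_image_eq _ Subtype.val_injective],
    ⟨e, ⟨⟨_, heT, rfl⟩, L.mem_ends_e⟩, ?_⟩⟩
  rintro _ ⟨⟨f, hf, rfl⟩, hfv⟩
  exact (f.2.resolve_right (not_not.2 hfv))

lemma isOneFactor_image_union {T : Set {f : E // f = e ∨ v ∉ G.ends f}}
    (hT : L.contract.IsOneFactor T) (heT : ⟨e, .inl rfl⟩ ∉ T) :
    G.IsOneFactor (Subtype.val '' T ∪ {h₁}) := by
  refine L.isOneFactor_iff.2 ⟨by rwa [L.preimage_image_union],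
    ⟨h₁, ⟨.inr rfl, L.mem_ends_h₁⟩, ?_⟩⟩
  rintro _ ⟨⟨f, hf, rfl⟩ | rfl, hfv⟩
  · obtain rfl : f = ⟨e, .inl rfl⟩ := Subtype.ext (f.2.resolve_right (not_not.2 hfv))
    exact absurd hf heT
  · rfl

lemma exists_isOneFactor_preimage_eq {T : Set {f : E // f = e ∨ v ∉ G.ends f}}
    (hT : L.contract.IsOneFactor T) : ∃ S, G.IsOneFactor S ∧ Subtype.val ⁻¹' S = T := by
  by_cases heT : ⟨e, .inl rfl⟩ ∈ T
  · exact ⟨_, L.isOneFactor_image hT heT, Set.preimage_image_eq _ Subtype.val_injective⟩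
  · exact ⟨_, L.isOneFactor_image_union hT heT, L.preimage_image_union T⟩

lemma disjoint_image_union_image {X Y : Set {f : E // f = e ∨ v ∉ G.ends f}}
    (hXY : Disjoint X Y) : Disjoint (Subtype.val '' X ∪ {h₁}) (Subtype.val '' Y) :=
  Set.disjoint_union_left.2 ⟨(Set.disjoint_image_iff Subtype.val_injective).2 hXY,
    Set.disjoint_singleton_left.2 (L.h₁_notMem_image Y)⟩

lemma disjoint_image_union_image_union {X Y : Set {f : E // f = e ∨ v ∉ G.ends f}}
    (hXY : Disjoint X Y) :
    Disjoint (Subtype.val '' X ∪ {h₁}) (Subtype.val '' Y ∪ {h₂}) :=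
  Set.disjoint_union_right.2 ⟨L.disjoint_image_union_image hXY,
    Set.disjoint_union_left.2 ⟨Set.disjoint_singleton_right.2 (L.swap.h₁_notMem_image X),
      Set.disjoint_singleton.2 L.h₁_ne_h₂⟩⟩

/-- At `v`, `S` uses at most one of the two half-edges, so a lift can use the other. -/
lemma exists_lift_disjoint {S : Set E} {T : Set {f : E // f = e ∨ v ∉ G.ends f}}
    (hS : G.IsOneFactor S) (hT : L.contract.IsOneFactor T)
    (hST : Disjoint (Subtype.val ⁻¹' S) T) :
    ∃ S', G.IsOneFactor S' ∧ Subtype.val ⁻¹' S' = T ∧ Disjoint S S' := by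
  have hST' : Disjoint S (Subtype.val '' T) := Set.disjoint_image_right.2 hST
  by_cases heT : ⟨e, .inl rfl⟩ ∈ T
  · exact ⟨_, L.isOneFactor_image hT heT, Set.preimage_image_eq _ Subtype.val_injective, hST'⟩
  by_cases h₁S : h₁ ∈ S
  · have h₂S := hS.notMem_of_mem h₁S L.mem_ends_h₁ L.swap.mem_ends_h₁ L.h₁_ne_h₂
    exact ⟨_, L.swap.isOneFactor_image_union hT heT, L.swap.preimage_image_union T,
      Set.disjoint_union_right.2 ⟨hST', Set.disjoint_singleton_right.2 h₂S⟩⟩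
  · exact ⟨_, L.isOneFactor_image_union hT heT, L.preimage_image_union T,
      Set.disjoint_union_right.2 ⟨hST', Set.disjoint_singleton_right.2 h₁S⟩⟩

lemma exists_disjoint_of_mem_e (h2 : L.contract.OneFactorsExtend) {S : Set E}
    (hS : G.IsOneFactor S) (heS : e ∈ S) :
    ∃ W : Set {f : E // f = e ∨ v ∉ G.ends f}, L.contract.IsOneFactor W ∧
      ⟨e, .inl rfl⟩ ∉ W ∧ Disjoint (Subtype.val '' W ∪ {h₁}) S := by
  obtain ⟨κ', hκ', hS'⟩ := h2 _ (L.isOneFactor_preimage hS)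
  have hκ'e : κ' ⟨e, .inl rfl⟩ = 0 := (Set.ext_iff.1 hS' _).1 heS
  refine ⟨{f | κ' f = 1}, hκ'.isOneFactor 1, by simp [hκ'e], ?_⟩
  rw [← L.image_preimage (hS.notMem_of_mem heS L.mem_ends_e L.mem_ends_h₁ L.e_ne_h₁)
    (hS.notMem_of_mem heS L.mem_ends_e L.swap.mem_ends_h₁ L.swap.e_ne_h₁), hS']
  exact L.disjoint_image_union_image
    (Set.disjoint_left.2 fun f (h1 : κ' f = 1) (h0 : κ' f = 0) => by simp_all)

lemma exists_extend_of_ne {κ' : {f : E // f = e ∨ v ∉ G.ends f} → Fin 3}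
    (hκ' : L.contract.IsProperColoring κ') {c : Fin 3} (hc : c ≠ κ' ⟨e, .inl rfl⟩) :
    ∃ κ, G.IsProperColoring κ ∧ κ h₁ = c ∧
      ∀ f : {f : E // f = e ∨ v ∉ G.ends f}, κ f = κ' f := by
  classical
  obtain ⟨c₂, hc₂, hc₂e⟩ := fin_three_exists_ne c (κ' ⟨e, .inl rfl⟩)
  let κ : E → Fin 3 := fun f =>
    if hf : f = e ∨ v ∉ G.ends f then κ' ⟨f, hf⟩ else if f = h₁ then c else c₂
  have hκ : ∀ f : {f : E // f = e ∨ v ∉ G.ends f}, κ f = κ' f := fun f => dif_pos f.2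
  have hκe : κ e = κ' ⟨e, .inl rfl⟩ := hκ ⟨e, .inl rfl⟩
  have hκ₁ : κ h₁ = c := by simp [κ, L.eq_or_notMem_ends_iff]
  have hκ₂ : κ h₂ = c₂ := by simp [κ, L.eq_or_notMem_ends_iff, L.h₁_ne_h₂.symm]
  refine ⟨κ, ?_, hκ₁, hκ⟩
  rintro f g ⟨hfg, w, hw⟩
  obtain ⟨hf, hg⟩ := Finset.mem_inter.1 hw
  by_cases hwv : w = v
  · subst hwv
    rcases (L.mem_ends_iff f).1 hf with rfl | rfl | rfl <;>
      rcases (L.mem_ends_iff g).1 hg with rfl | rfl | rfl <;>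
      simp only [hκe, hκ₁, hκ₂] <;> first | exact absurd rfl hfg | grind
  · have hf' := L.eq_or_notMem_ends_of_mem_ends hwv hf
    have hg' := L.eq_or_notMem_ends_of_mem_ends hwv hg
    have := hκ' (f := ⟨f, hf'⟩) (g := ⟨g, hg'⟩) ⟨fun h => hfg (congrArg Subtype.val h),
      ⟨w, hwv⟩, Finset.mem_inter.2 ⟨L.mem_contract_ends.2 hf, L.mem_contract_ends.2 hg⟩⟩
    rwa [← hκ ⟨f, hf'⟩, ← hκ ⟨g, hg'⟩] at this

lemma exists_extend {κ' : {f : E // f = e ∨ v ∉ G.ends f} → Fin 3}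
    (hκ' : L.contract.IsProperColoring κ') :
    ∃ κ, G.IsProperColoring κ ∧ ∀ f : {f : E // f = e ∨ v ∉ G.ends f}, κ f = κ' f := by
  obtain ⟨c, hc⟩ := exists_ne (κ' ⟨e, .inl rfl⟩)
  obtain ⟨κ, hκ, -, hκκ'⟩ := L.exists_extend_of_ne hκ' hc
  exact ⟨κ, hκ, hκκ'⟩

theorem oneFactorsExtend (h : L.contract.OneFactorsExtend) : G.OneFactorsExtend := by
  intro S hS
  obtain ⟨κ', hκ', hS'⟩ := h _ (L.isOneFactor_preimage hS)
  have he : e ∈ S ↔ κ' ⟨e, .inl rfl⟩ = 0 := Set.ext_iff.1 hS' ⟨e, .inl rfl⟩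
  obtain ⟨x, ⟨hxS, hxv⟩, -⟩ := hS v
  have hκ'e : ∀ {h}, h ∈ S → v ∈ G.ends h → h ≠ e → 0 ≠ κ' ⟨e, .inl rfl⟩ :=
    fun hhS hhv hhe h0 => hS.notMem_of_mem hhS hhv L.mem_ends_e hhe (he.2 h0.symm)
  obtain ⟨κ, hκ, hκx, hκκ'⟩ : ∃ κ, G.IsProperColoring κ ∧ κ x = 0 ∧
      ∀ f : {f : E // f = e ∨ v ∉ G.ends f}, κ f = κ' f := by
    rcases (L.mem_ends_iff x).1 hxv with rfl | rfl | rfl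
    · obtain ⟨κ, hκ, hκκ'⟩ := L.exists_extend hκ'
      exact ⟨κ, hκ, (hκκ' ⟨x, .inl rfl⟩).trans (he.1 hxS), hκκ'⟩
    · exact L.exists_extend_of_ne hκ' (hκ'e hxS hxv L.e_ne_h₁.symm)
    · exact L.swap.exists_extend_of_ne hκ' (hκ'e hxS hxv L.swap.e_ne_h₁.symm)
  refine ⟨κ, hκ, L.eq_of_preimage_eq hS (hκ.isOneFactor 0) ?_ hxS hκx hxv⟩
  rw [hS']
  ext f
  change κ' f = 0 ↔ κ f = 0
  rw [hκκ']

lemma exists_separate_h₁ {κ' : {f : E // f = e ∨ v ∉ G.ends f} → Fin 3}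
    (hκ' : L.contract.IsProperColoring κ') {g : E} (hg : g ≠ h₁) :
    ∃ κ, G.IsProperColoring κ ∧ κ h₁ ≠ κ g := by
  by_cases hg' : g = e ∨ v ∉ G.ends g
  · obtain ⟨c, hce, hcg⟩ := fin_three_exists_ne (κ' ⟨e, .inl rfl⟩) (κ' ⟨g, hg'⟩)
    obtain ⟨κ, hκ, hκ₁, hκκ'⟩ := L.exists_extend_of_ne hκ' hce
    exact ⟨κ, hκ, hκ₁ ▸ (hκκ' ⟨g, hg'⟩).symm ▸ hcg⟩
  · obtain rfl : g = h₂ := by rw [L.eq_or_notMem_ends_iff] at hg'; tauto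
    obtain ⟨κ, hκ, -⟩ := L.exists_extend hκ'
    exact ⟨κ, hκ, hκ (lineGraph_adj_of_mem hg.symm L.mem_ends_h₁ L.swap.mem_ends_h₁)⟩

theorem edgesSeparable (h : L.contract.EdgesSeparable) : G.EdgesSeparable := by
  obtain ⟨κ₀, hκ₀⟩ := h.exists_isProperColoring ⟨u, L.ne.symm⟩
  have separate_half : ∀ {f g}, f = h₁ ∨ f = h₂ → f ≠ g →
      ∃ κ, G.IsProperColoring κ ∧ κ f ≠ κ g := by
    rintro f g (rfl | rfl) hfg
    exacts [L.exists_separate_h₁ hκ₀ hfg.symm, L.swap.exists_separate_h₁ hκ₀ hfg.symm]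
  intro f g hfg
  by_cases hf : f = h₁ ∨ f = h₂
  · exact separate_half hf hfg
  by_cases hg : g = h₁ ∨ g = h₂
  · obtain ⟨κ, hκ, hκgf⟩ := separate_half hg hfg.symm
    exact ⟨κ, hκ, hκgf.symm⟩
  obtain ⟨κ', hκ', hκ'fg⟩ := h ⟨f, L.eq_or_notMem_ends_iff.2 (by tauto)⟩
    ⟨g, L.eq_or_notMem_ends_iff.2 (by tauto)⟩ fun h => hfg (congrArg Subtype.val h)
  obtain ⟨κ, hκ, hκκ'⟩ := L.exists_extend hκ'
  exact ⟨κ, hκ, fun h' => hκ'fg ((hκκ' ⟨f, _⟩).symm.trans (h'.trans (hκκ' ⟨g, _⟩)))⟩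

lemma exists_reflTransGen_lift {x : {f : E // f = e ∨ v ∉ G.ends f}}
    {T T' : Set {f : E // f = e ∨ v ∉ G.ends f}}
    (hTT' : Relation.ReflTransGen (L.contract.AvoidingAdj x) T T') {S : Set E}
    (hS : G.IsOneFactor S) (hxS : x.1 ∉ S) (hST : Subtype.val ⁻¹' S = T) :
    ∃ S', G.IsOneFactor S' ∧ x.1 ∉ S' ∧ Subtype.val ⁻¹' S' = T' ∧
      Relation.ReflTransGen (G.AvoidingAdj x) S S' := by
  induction hTT' with
  | refl => exact ⟨S, hS, hxS, hST, .refl⟩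
  | tail _ hbc ih =>
    obtain ⟨Sb, hSb, hxSb, rfl, hSSb⟩ := ih
    obtain ⟨-, -, hTc, hxTc, hdisj⟩ := hbc
    obtain ⟨Sc, hSc, rfl, hSbSc⟩ := L.exists_lift_disjoint hSb hTc hdisj
    exact ⟨Sc, hSc, hxTc, rfl, hSSb.tail ⟨hSb, hxSb, hSc, hxTc, hSbSc⟩⟩

/-- All one-factors avoiding `x` are linked to a single one: the lift through `e` of a color
class of the contraction that contains `e` but not `x`. -/
lemma reflTransGen_avoidingAdj_of_notMem_ends (h3 : L.contract.EdgesSeparable)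
    (h4 : L.contract.AvoidingOneFactorsConnected) {x : E} (hx : (G.ends x).card = 1)
    (hxv : v ∉ G.ends x) {S T : Set E} (hS : G.IsOneFactor S) (hxS : x ∉ S)
    (hT : G.IsOneFactor T) (hxT : x ∉ T) : Relation.ReflTransGen (G.AvoidingAdj x) S T := by
  have hxe : x ≠ e := fun h => hxv (h ▸ L.mem_ends_e)
  obtain ⟨κ', hκ', hκ'ex⟩ :=
    h3 ⟨e, .inl rfl⟩ ⟨x, .inr hxv⟩ fun h => hxe (congrArg Subtype.val h).symm
  have reach : ∀ S, G.IsOneFactor S → x ∉ S → ∃ S', G.IsOneFactor S' ∧ e ∈ S' ∧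
      Subtype.val ⁻¹' S' = {f | κ' f = κ' ⟨e, .inl rfl⟩} ∧
      Relation.ReflTransGen (G.AvoidingAdj x) S S' := by
    intro S hS hxS
    have chain := h4 ⟨x, .inr hxv⟩ ((L.card_contract_ends hxv).trans hx) _ _
      (L.isOneFactor_preimage hS) hxS (hκ'.isOneFactor _) (Ne.symm hκ'ex)
    obtain ⟨S', hS', -, hpre, hSS'⟩ := L.exists_reflTransGen_lift chain hS hxS rfl
    exact ⟨S', hS', Set.ext_iff.1 hpre ⟨e, .inl rfl⟩ |>.2 rfl, hpre, hSS'⟩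
  obtain ⟨S', hS', heS', hpreS, hSS'⟩ := reach S hS hxS
  obtain ⟨T', hT', heT', hpreT, hTT'⟩ := reach T hT hxT
  obtain rfl := L.eq_of_preimage_eq hS' hT' (hpreS.trans hpreT.symm) heS' heT' L.mem_ends_e
  exact hSS'.trans (reflTransGen_avoidingAdj_symm hTT')

/-- The middle step is the lift of the complement of `X ∪ Y`, which contains `e`. -/
lemma reflTransGen_image_union {X Y : Set {f : E // f = e ∨ v ∉ G.ends f}}
    (hX : L.contract.IsOneFactor X) (heX : ⟨e, .inl rfl⟩ ∉ X)
    (hY : L.contract.IsOneFactor Y) (heY : ⟨e, .inl rfl⟩ ∉ Y) (hXY : Disjoint X Y) :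
    Relation.ReflTransGen (G.AvoidingAdj h₂)
      (Subtype.val '' X ∪ {h₁}) (Subtype.val '' Y ∪ {h₁}) := by
  have heZ : ⟨e, .inl rfl⟩ ∈ (X ∪ Y)ᶜ := by simp [heX, heY]
  have hZ := L.isOneFactor_image (hX.compl_union hY hXY) heZ
  have hXZ : Disjoint X (X ∪ Y)ᶜ := disjoint_compl_right.mono_left Set.subset_union_left
  have hYZ : Disjoint Y (X ∪ Y)ᶜ := disjoint_compl_right.mono_left Set.subset_union_right
  exact .head ⟨L.isOneFactor_image_union hX heX, L.h₂_notMem_image_union X, hZ,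
      L.swap.h₁_notMem_image _, L.disjoint_image_union_image hXZ⟩
    (.single ⟨hZ, L.swap.h₁_notMem_image _, L.isOneFactor_image_union hY heY,
      L.h₂_notMem_image_union Y, (L.disjoint_image_union_image hYZ).symm⟩)

/-- Each one-factor avoiding `h₂` is linked to a lift through `h₁`, and these lifts are linked
through the connectivity of the contraction at its half-edge `e`. -/
lemma reflTransGen_avoidingAdj_h₂ (h2 : L.contract.OneFactorsExtend)
    (h4 : L.contract.AvoidingOneFactorsConnected) {S T : Set E} (hS : G.IsOneFactor S)
    (h₂S : h₂ ∉ S) (hT : G.IsOneFactor T) (h₂T : h₂ ∉ T) :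
    Relation.ReflTransGen (G.AvoidingAdj h₂) S T := by
  have reduce : ∀ S, G.IsOneFactor S → h₂ ∉ S → ∃ W, L.contract.IsOneFactor W ∧
      ⟨e, .inl rfl⟩ ∉ W ∧
      Relation.ReflTransGen (G.AvoidingAdj h₂) S (Subtype.val '' W ∪ {h₁}) := by
    intro S hS h₂S
    rcases L.isOneFactor_cases hS with ⟨heS, -⟩ | ⟨h₁S, heS, -⟩ | ⟨h₂S', -⟩
    · obtain ⟨W, hW, heW, hWS⟩ := L.exists_disjoint_of_mem_e h2 hS heS
      exact ⟨W, hW, heW, .single ⟨hS, h₂S, L.isOneFactor_image_union hW heW,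
        L.h₂_notMem_image_union W, hWS.symm⟩⟩
    · exact ⟨_, L.isOneFactor_preimage hS, heS,
        (L.image_preimage_union h₁S h₂S).symm ▸ .refl⟩
    · exact absurd h₂S' h₂S
  obtain ⟨W, hW, heW, hSW⟩ := reduce S hS h₂S
  obtain ⟨W', hW', heW', hTW'⟩ := reduce T hT h₂T
  have hWW' := Relation.ReflTransGen.lift' (fun W => Subtype.val '' W ∪ {h₁})
    (fun _ _ ⟨hX, heX, hY, heY, hXY⟩ => L.reflTransGen_image_union hX heX hY heY hXY)
    W W' (h4 _ L.card_contract_ends_e W W' hW heW hW' heW')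
  exact (hSW.trans hWW').trans (reflTransGen_avoidingAdj_symm hTW')

theorem avoidingOneFactorsConnected (h2 : L.contract.OneFactorsExtend)
    (h3 : L.contract.EdgesSeparable) (h4 : L.contract.AvoidingOneFactorsConnected) :
    G.AvoidingOneFactorsConnected := by
  intro x hx S T hS hxS hT hxT
  by_cases hxv : v ∈ G.ends x
  · rcases (L.mem_ends_iff x).1 hxv with rfl | rfl | rfl
    · simp [L.ends_e, L.ne] at hx
    · exact L.swap.reflTransGen_avoidingAdj_h₂ h2 h4 hS hxS hT hxT
    · exact L.reflTransGen_avoidingAdj_h₂ h2 h4 hS hxS hT hxT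
  · exact L.reflTransGen_avoidingAdj_of_notMem_ends h3 h4 hx hxv hS hxS hT hxT

variable {cl : Set E → Fin 3}

/-- The lift of the complement of `X ∪ Y`, which contains `e`, is disjoint from the lifts of
`X` and `Y` through either half-edge, so it takes the third color. -/
lemma cl_image_union_eq (hcl : G.IsOneFactorColoring cl)
    {X Y : Set {f : E // f = e ∨ v ∉ G.ends f}} (hX : L.contract.IsOneFactor X)
    (heX : ⟨e, .inl rfl⟩ ∉ X) (hY : L.contract.IsOneFactor Y) (heY : ⟨e, .inl rfl⟩ ∉ Y)
    (hXY : Disjoint X Y)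
    (hXne : cl (Subtype.val '' X ∪ {h₁}) ≠ cl (Subtype.val '' X ∪ {h₂})) :
    cl (Subtype.val '' Y ∪ {h₁}) = cl (Subtype.val '' X ∪ {h₁}) := by
  have heZ : ⟨e, .inl rfl⟩ ∈ (X ∪ Y)ᶜ := by simp [heX, heY]
  have hZ := L.isOneFactor_image (hX.compl_union hY hXY) heZ
  have hXZ : Disjoint X (X ∪ Y)ᶜ := disjoint_compl_right.mono_left Set.subset_union_left
  have hYZ : Disjoint Y (X ∪ Y)ᶜ := disjoint_compl_right.mono_left Set.subset_union_right
  have hY₁ := L.isOneFactor_image_union hY heY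
  obtain h | h | h := fin_three_eq_or_eq_or_eq
    (hcl _ _ hZ (L.isOneFactor_image_union hX heX) (L.disjoint_image_union_image hXZ).symm)
    (hcl _ _ hZ (L.swap.isOneFactor_image_union hX heX)
      (L.swap.disjoint_image_union_image hXZ).symm) hXne
    (cl (Subtype.val '' Y ∪ {h₁}))
  · exact absurd h (hcl _ _ hY₁ hZ (L.disjoint_image_union_image hYZ))
  · exact h
  · exact absurd h (hcl _ _ hY₁ (L.swap.isOneFactor_image_union hX heX)
      (L.disjoint_image_union_image_union hXY.symm))

lemma cl_eq_of_mem_h₁ {c : Fin 3}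
    (hc : ∀ T : Set {f : E // f = e ∨ v ∉ G.ends f}, L.contract.IsOneFactor T →
      ⟨e, .inl rfl⟩ ∉ T → cl (Subtype.val '' T ∪ {h₁}) = c)
    {S : Set E} (hS : G.IsOneFactor S) (h₁S : h₁ ∈ S) : cl S = c := by
  rw [← L.image_preimage_union h₁S
    (hS.notMem_of_mem h₁S L.mem_ends_h₁ L.swap.mem_ends_h₁ L.h₁_ne_h₂)]
  exact hc _ (L.isOneFactor_preimage hS)
    (hS.notMem_of_mem h₁S L.mem_ends_h₁ L.mem_ends_e L.e_ne_h₁.symm)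

lemma cl_ne_of_mem_e (h2 : L.contract.OneFactorsExtend) (hcl : G.IsOneFactorColoring cl)
    {c : Fin 3}
    (hc : ∀ T : Set {f : E // f = e ∨ v ∉ G.ends f}, L.contract.IsOneFactor T →
      ⟨e, .inl rfl⟩ ∉ T → cl (Subtype.val '' T ∪ {h₁}) = c)
    {S : Set E} (hS : G.IsOneFactor S) (heS : e ∈ S) : cl S ≠ c := by
  obtain ⟨W, hW, heW, hWS⟩ := L.exists_disjoint_of_mem_e h2 hS heS
  rw [← hc W hW heW]
  exact (hcl _ _ (L.isOneFactor_image_union hW heW) hS hWS).symm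

/-- Connectivity spreads the two colors of the lifts of `T₀` through `h₁` and `h₂` to the lifts
of every one-factor of the contraction avoiding `e`. -/
lemma isLocalAt_of_cl_image_union_ne (h2 : L.contract.OneFactorsExtend)
    (h4 : L.contract.AvoidingOneFactorsConnected) (hcl : G.IsOneFactorColoring cl)
    {T₀ : Set {f : E // f = e ∨ v ∉ G.ends f}} (hT₀ : L.contract.IsOneFactor T₀)
    (heT₀ : ⟨e, .inl rfl⟩ ∉ T₀)
    (hT₀ne : cl (Subtype.val '' T₀ ∪ {h₁}) ≠ cl (Subtype.val '' T₀ ∪ {h₂})) :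
    G.IsLocalAt cl v := by
  have hpropagate : ∀ T, Relation.ReflTransGen (L.contract.AvoidingAdj ⟨e, .inl rfl⟩) T₀ T →
      cl (Subtype.val '' T ∪ {h₁}) = cl (Subtype.val '' T₀ ∪ {h₁}) ∧
      cl (Subtype.val '' T ∪ {h₂}) = cl (Subtype.val '' T₀ ∪ {h₂}) := by
    intro T hT
    induction hT with
    | refl => exact ⟨rfl, rfl⟩
    | tail _ hXY ih =>
      obtain ⟨hX, heX, hY, heY, hXY⟩ := hXY
      have hXne := ih.1 ▸ ih.2 ▸ hT₀ne
      exact ⟨(L.cl_image_union_eq hcl hX heX hY heY hXY hXne).trans ih.1,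
        (L.swap.cl_image_union_eq hcl hX heX hY heY hXY hXne.symm).trans ih.2⟩
  have hall := fun T hT heT =>
    hpropagate T (h4 _ L.card_contract_ends_e T₀ T hT₀ heT₀ hT heT)
  have hcl₁ : ∀ {S}, G.IsOneFactor S → h₁ ∈ S → cl S = cl (Subtype.val '' T₀ ∪ {h₁}) :=
    L.cl_eq_of_mem_h₁ fun T hT heT => (hall T hT heT).1
  have hcl₂ : ∀ {S}, G.IsOneFactor S → h₂ ∈ S → cl S = cl (Subtype.val '' T₀ ∪ {h₂}) :=
    L.swap.cl_eq_of_mem_h₁ fun T hT heT => (hall T hT heT).2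
  have hcle₁ : ∀ {S}, G.IsOneFactor S → e ∈ S → cl S ≠ cl (Subtype.val '' T₀ ∪ {h₁}) :=
    L.cl_ne_of_mem_e h2 hcl fun T hT heT => (hall T hT heT).1
  have hcle₂ : ∀ {S}, G.IsOneFactor S → e ∈ S → cl S ≠ cl (Subtype.val '' T₀ ∪ {h₂}) :=
    L.swap.cl_ne_of_mem_e h2 hcl fun T hT heT => (hall T hT heT).2
  intro S T x hS hT hxv hxS hxT
  rcases (L.mem_ends_iff x).1 hxv with rfl | rfl | rfl
  · obtain h | h | h := fin_three_eq_or_eq_or_eq hT₀ne (hcle₁ hS hxS).symm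
      (hcle₂ hS hxS).symm (cl T)
    exacts [absurd h (hcle₁ hT hxT), absurd h (hcle₂ hT hxT), h.symm]
  · exact (hcl₁ hS hxS).trans (hcl₁ hT hxT).symm
  · exact (hcl₂ hS hxS).trans (hcl₂ hT hxT).symm

/-- Otherwise the coloring descends to the contraction, where it comes from a vertex. -/
lemma exists_isLocalAt_of_forall_eq (h5 : L.contract.OneFactorColoringsLocal)
    (hcl : G.IsOneFactorColoring cl)
    (hsame : ∀ T : Set {f : E // f = e ∨ v ∉ G.ends f}, L.contract.IsOneFactor T →
      ⟨e, .inl rfl⟩ ∉ T → cl (Subtype.val '' T ∪ {h₁}) = cl (Subtype.val '' T ∪ {h₂})) :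
    ∃ w, G.IsLocalAt cl w := by
  classical
  let cl' : Set {f : E // f = e ∨ v ∉ G.ends f} → Fin 3 := fun T =>
    if ⟨e, .inl rfl⟩ ∈ T then cl (Subtype.val '' T) else cl (Subtype.val '' T ∪ {h₁})
  have hcl_eq : ∀ S, G.IsOneFactor S → cl S = cl' (Subtype.val ⁻¹' S) := by
    intro S hS
    rcases L.isOneFactor_cases hS with ⟨heS, h₁S, h₂S⟩ | ⟨h₁S, heS, h₂S⟩ | ⟨h₂S, heS, h₁S⟩
    · rw [show cl' _ = _ from if_pos heS, L.image_preimage h₁S h₂S]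
    · rw [show cl' _ = _ from if_neg heS, L.image_preimage_union h₁S h₂S]
    · rw [show cl' _ = _ from if_neg heS, hsame _ (L.isOneFactor_preimage hS) heS,
        L.swap.image_preimage_union h₂S h₁S]
  have hcl' : L.contract.IsOneFactorColoring cl' := by
    intro T T' hT hT' hTT'
    obtain ⟨S, hS, rfl⟩ := L.exists_isOneFactor_preimage_eq hT
    obtain ⟨S', hS', rfl, hSS'⟩ := L.exists_lift_disjoint hS hT' hTT'
    rw [← hcl_eq S hS, ← hcl_eq S' hS']
    exact hcl S S' hS hS' hSS'
  obtain ⟨w, hw⟩ := h5 cl' hcl'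
  refine ⟨w, fun S T x hS hT hxw hxS hxT => ?_⟩
  rw [hcl_eq S hS, hcl_eq T hT]
  exact hw _ _ ⟨x, L.eq_or_notMem_ends_of_mem_ends w.2 hxw⟩ (L.isOneFactor_preimage hS)
    (L.isOneFactor_preimage hT) (L.mem_contract_ends.2 hxw) hxS hxT

theorem oneFactorColoringsLocal (h2 : L.contract.OneFactorsExtend)
    (h4 : L.contract.AvoidingOneFactorsConnected) (h5 : L.contract.OneFactorColoringsLocal) :
    G.OneFactorColoringsLocal := by
  intro cl hcl
  by_cases hne : ∃ T : Set {f : E // f = e ∨ v ∉ G.ends f}, L.contract.IsOneFactor T ∧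
      ⟨e, .inl rfl⟩ ∉ T ∧ cl (Subtype.val '' T ∪ {h₁}) ≠ cl (Subtype.val '' T ∪ {h₂})
  · obtain ⟨T, hT, heT, hTne⟩ := hne
    exact ⟨v, L.isLocalAt_of_cl_image_union_ne h2 h4 hcl hT heT hTne⟩
  · push Not at hne
    exact L.exists_isLocalAt_of_forall_eq h5 hcl hne

end IsLeaf

lemma exists_isLeaf [Fintype V] [Nontrivial V] (htree : (underlying G).IsTree) :
    ∃ v u e h₁ h₂, G.IsLeaf v u e h₁ h₂ := by
  classical
  obtain ⟨v, hv⟩ := htree.exists_vert_degree_one_of_nontrivial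
  obtain ⟨u, ⟨hvu, e, he⟩, hu⟩ := degree_eq_one_iff_existsUnique_adj.1 hv
  have half : ∀ f, v ∈ G.ends f → f ≠ e → G.ends f = {v} := by
    intro f hf hfe
    rcases G.ends_card f with h | h
    · obtain ⟨x, hx⟩ := Finset.card_eq_one.1 h
      rw [hx] at hf ⊢
      rw [Finset.mem_singleton.1 hf]
    · obtain ⟨x, y, hxy, hf'⟩ := Finset.card_eq_two.1 h
      obtain ⟨y, hyv, hfy⟩ : ∃ y, v ≠ y ∧ G.ends f = {v, y} := by
        rw [hf'] at hf ⊢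
        rcases Finset.mem_insert.1 hf with rfl | hy
        · exact ⟨y, hxy, rfl⟩
        · obtain rfl := Finset.mem_singleton.1 hy
          exact ⟨x, hxy.symm, Finset.pair_comm _ _⟩
      obtain rfl := hu y ⟨hyv, f, hfy⟩
      exact absurd (G.no_parallel f e h (hfy.trans he.symm)) hfe
  obtain ⟨a, b, c, hab, hac, hbc, habc⟩ := G.cubic v
  have hmem := fun f => (habc f).2
  rcases (habc e).1 (by simp [he]) with rfl | rfl | rfl
  · exact ⟨v, u, e, b, c, hvu, he, half b (hmem b (by simp)) hab.symm,
      half c (hmem c (by simp)) hac.symm, hbc, habc⟩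
  · exact ⟨v, u, e, a, c, hvu, he, half a (hmem a (by simp)) hab,
      half c (hmem c (by simp)) hbc.symm, hac, fun f => (habc f).trans (by tauto)⟩
  · exact ⟨v, u, e, a, b, hvu, he, half a (hmem a (by simp)) hac,
      half b (hmem b (by simp)) hbc, hab, fun f => (habc f).trans (by tauto)⟩

universe uV uE

theorem tree_induction
    {P : ∀ {V : Type uV} {E : Type uE} [DecidableEq V], CubicGraph V E → Prop}
    (base : ∀ {V : Type uV} {E : Type uE} [DecidableEq V] (G : CubicGraph V E) (v : V),
      (∀ w, w = v) → P G)
    (step : ∀ {V : Type uV} {E : Type uE} [DecidableEq V] [Fintype V] (G : CubicGraph V E)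
      {v u e h₁ h₂} (L : G.IsLeaf v u e h₁ h₂), (underlying G).IsTree → P L.contract → P G)
    {V : Type uV} {E : Type uE} [DecidableEq V] [Fintype V] (G : CubicGraph V E)
    (htree : (underlying G).IsTree) : P G := by
  suffices ∀ n, ∀ {V : Type uV} {E : Type uE} [DecidableEq V] [Fintype V] (G : CubicGraph V E),
      (underlying G).IsTree → Fintype.card V ≤ n → P G from this _ G htree le_rfl
  intro n
  induction n with
  | zero =>
    intro V E _ _ G htree hcard
    have := htree.connected.nonempty
    exact absurd hcard (Fintype.card_pos (α := V)).not_ge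
  | succ n ih =>
    intro V E _ _ G htree hcard
    rcases subsingleton_or_nontrivial V with hV | hV
    · obtain ⟨v⟩ := htree.connected.nonempty
      exact base G v fun w => Subsingleton.elim w v
    · obtain ⟨v, u, e, h₁, h₂, L⟩ := exists_isLeaf htree
      refine step G L htree (ih L.contract (L.contract_isTree htree) ?_)
      have := Fintype.card_subtype_lt (p := (· ≠ v)) (x := v) (by simp)
      omega

section SingleVertex

variable {v : V} (hv : ∀ w, w = v)
include hv

lemma mem_ends_of_forall_eq (f : E) : v ∈ G.ends f := by
  obtain ⟨w, hw⟩ := ends_nonempty (G := G) f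
  rwa [hv w] at hw

lemma isOneFactor_singleton_of_forall_eq (f : E) : G.IsOneFactor {f} := by
  intro w
  rw [hv w]
  exact ⟨f, ⟨rfl, mem_ends_of_forall_eq hv f⟩, fun g hg => hg.1⟩

lemma IsOneFactor.eq_singleton_of_forall_eq {S : Set E} (hS : G.IsOneFactor S) {f : E}
    (hf : f ∈ S) : S = {f} :=
  Set.ext fun g => ⟨fun hg => hS.eq_of_mem hg (mem_ends_of_forall_eq hv g) hf
    (mem_ends_of_forall_eq hv f), fun hg => hg ▸ hf⟩

lemma oneFactorsExtend_of_forall_eq : G.OneFactorsExtend := by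
  intro S hS
  obtain ⟨f, ⟨hf, -⟩, -⟩ := hS v
  obtain rfl := hS.eq_singleton_of_forall_eq hv hf
  obtain ⟨a, b, -, hab, -⟩ := G.cubic v
  obtain ⟨g, hgf⟩ : ∃ g, g ≠ f := by
    by_cases haf : a = f
    exacts [⟨b, haf ▸ hab.symm⟩, ⟨a, haf⟩]
  obtain ⟨κ, hκ, hκf, -⟩ := exists_isProperColoring_of_disjoint hS
    (isOneFactor_singleton_of_forall_eq hv g) (Set.disjoint_singleton.2 hgf.symm)
  exact ⟨κ, hκ, hκf⟩

lemma edgesSeparable_of_forall_eq : G.EdgesSeparable := by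
  intro f g hfg
  obtain ⟨κ, hκ, -⟩ := exists_isProperColoring_of_disjoint
    (isOneFactor_singleton_of_forall_eq hv f) (isOneFactor_singleton_of_forall_eq hv g)
    (Set.disjoint_singleton.2 hfg)
  exact ⟨κ, hκ, hκ (lineGraph_adj_of_mem hfg (mem_ends_of_forall_eq hv f)
    (mem_ends_of_forall_eq hv g))⟩

lemma avoidingOneFactorsConnected_of_forall_eq : G.AvoidingOneFactorsConnected := by
  intro x _ S T hS hxS hT hxT
  obtain ⟨f, ⟨hf, -⟩, -⟩ := hS v
  obtain ⟨g, ⟨hg, -⟩, -⟩ := hT v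
  obtain rfl := hS.eq_singleton_of_forall_eq hv hf
  obtain rfl := hT.eq_singleton_of_forall_eq hv hg
  by_cases hfg : f = g
  · exact hfg ▸ .refl
  · exact .single ⟨hS, hxS, hT, hxT, Set.disjoint_singleton.2 hfg⟩

lemma oneFactorColoringsLocal_of_forall_eq : G.OneFactorColoringsLocal :=
  fun _ _ => ⟨v, fun _ _ _ hS hT _ hxS hxT => by
    rw [hS.eq_singleton_of_forall_eq hv hxS, hT.eq_singleton_of_forall_eq hv hxT]⟩

end SingleVertex

section Tree

variable [Fintype V]

theorem oneFactorsExtend_of_isTree (htree : (underlying G).IsTree) : G.OneFactorsExtend :=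
  tree_induction (P := fun G => G.OneFactorsExtend)
    (fun _ _ hv => oneFactorsExtend_of_forall_eq hv) (fun _ _ _ _ _ _ L _ => L.oneFactorsExtend)
    G htree

theorem edgesSeparable_of_isTree (htree : (underlying G).IsTree) : G.EdgesSeparable :=
  tree_induction (P := fun G => G.EdgesSeparable)
    (fun _ _ hv => edgesSeparable_of_forall_eq hv) (fun _ _ _ _ _ _ L _ => L.edgesSeparable)
    G htree

theorem avoidingOneFactorsConnected_of_isTree (htree : (underlying G).IsTree) :
    G.AvoidingOneFactorsConnected :=
  tree_induction (P := fun G => G.AvoidingOneFactorsConnected)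
    (fun _ _ hv => avoidingOneFactorsConnected_of_forall_eq hv)
    (fun _ _ _ _ _ _ L htree => L.avoidingOneFactorsConnected
      (oneFactorsExtend_of_isTree (L.contract_isTree htree))
      (edgesSeparable_of_isTree (L.contract_isTree htree)))
    G htree

theorem oneFactorColoringsLocal_of_isTree (htree : (underlying G).IsTree) :
    G.OneFactorColoringsLocal :=
  tree_induction (P := fun G => G.OneFactorColoringsLocal)
    (fun _ _ hv => oneFactorColoringsLocal_of_forall_eq hv)
    (fun _ _ _ _ _ _ L htree => L.oneFactorColoringsLocal
      (oneFactorsExtend_of_isTree (L.contract_isTree htree))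
      (avoidingOneFactorsConnected_of_isTree (L.contract_isTree htree)))
    G htree

end Tree

end CubicGraph

theorem cubic_tree_edgeReflexive_general {V E : Type*} [DecidableEq V] [Fintype V]
    (G : CubicGraph V E) (htree : (underlying G).IsTree) :
    EdgeReflexive G :=
  have : Nonempty V := htree.connected.nonempty
  G.isReflexive_lineGraph (G.oneFactorsExtend_of_isTree htree) (G.edgesSeparable_of_isTree htree)
    (G.oneFactorColoringsLocal_of_isTree htree)

/-- Every cubic tree (a graph obtained from a tree by adding half-edges so
that every vertex is incident with exactly three edges) is edge-reflexive. -/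
theorem cubic_tree_edgeReflexive {V E : Type*} [DecidableEq V] [Fintype V] [Fintype E]
    (G : CubicGraph V E) (htree : (underlying G).IsTree) :
    EdgeReflexive G :=
  cubic_tree_edgeReflexive_general G htree
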